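/- Let A be a two-block SBM adjacency matrix with parameters (N, p). Then for all indices i and j lying in different communities, E[(A³)_{ij}] = (N−1)(3N−5)p²(1−p) + (N−1)²(1−p)³ + (1−p) + 2(N−1)p(1−p) + 2(N−1)(1−p)². -/

import Mathlib

open MeasureTheory ProbabilityTheory Matrix

/-- `i` and `j` lie in the same community, where the communities of `Fin (2*N)` are
`{0, …, N-1}` and `{N, …, 2N-1}`. -/
def sameCom (N : ℕ) (i j : Fin (2 * N)) : Prop := ((i : ℕ) < N ↔ (j : ℕ) < N)

instance (N : ℕ) (i j : Fin (2 * N)) : Decidable (sameCom N i j) := by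
  unfold sameCom; infer_instance

/-- The Bernoulli distribution on `ℝ` with success probability `q`:
mass `q` at `1` and mass `1 - q` at `0`. -/
noncomputable def bernoulliReal (q : ℝ) : Measure ℝ :=
  ENNReal.ofReal q • Measure.dirac (1 : ℝ) + ENNReal.ofReal (1 - q) • Measure.dirac (0 : ℝ)

/-- `A` is a two-block SBM adjacency matrix with parameters `(N, p)` under the measure `μ`. -/
structure IsSBM {Ω : Type*} [MeasurableSpace Ω] (μ : Measure Ω) (N : ℕ) (p : ℝ)
    (A : Ω → Matrix (Fin (2 * N)) (Fin (2 * N)) ℝ) : Prop where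
  isProb : IsProbabilityMeasure μ
  symm : ∀ ω, (A ω)ᵀ = A ω
  diag : ∀ ω i, A ω i i = 0
  vals : ∀ ω i j, A ω i j = 0 ∨ A ω i j = 1
  meas : ∀ i j, Measurable fun ω => A ω i j
  indep : iIndepFun
    (fun (e : {e : Fin (2 * N) × Fin (2 * N) // e.1 < e.2}) ω => A ω e.1.1 e.1.2) μ
  bern : ∀ i j, i < j →
    μ.map (fun ω => A ω i j) = bernoulliReal (if sameCom N i j then p else 1 - p)

open Finset

/-!
Expanding `(A ^ 3) i j = ∑ k, ∑ l, A i k * A k l * A l j`, a walk `i → k → l → j` through a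
loop contributes nothing, and otherwise, since the entries are independent and `{0, 1}`-valued,
it contributes the product of the edge probabilities of its *distinct* edges. The walks are
`i → j → i → j`, the walks revisiting `j` or `i` after one step, and the walks through two
distinct fresh vertices `k ≠ l`. Outside `{i, j}` each community has exactly `N - 1` vertices and
edge probabilities only depend on communities, so every sum over a fresh vertex is `N - 1` times
a sum over the two community labels.
-/

lemma Finset.sum_comp_eq_mul_sum_of_card_fiber {ι κ R : Type*} [Fintype κ] [DecidableEq κ]
    [Semiring R] {s : Finset ι} {t : ι → κ} {m : ℕ} (h : ∀ b, #{a ∈ s | t a = b} = m)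
    (g : κ → R) : ∑ a ∈ s, g (t a) = m * ∑ b, g b := by
  rw [← sum_fiberwise s t, mul_sum]
  refine sum_congr rfl fun b _ => ?_
  rw [sum_congr rfl fun a ha => congrArg g (mem_filter.1 ha).2, sum_const, h, nsmul_eq_mul]

lemma Finset.sum_univ_eq_add_add_sum_compl_pair {α M : Type*} [Fintype α] [DecidableEq α]
    [AddCommMonoid M] {a b : α} (hab : a ≠ b) (f : α → M) :
    ∑ x, f x = f a + f b + ∑ x ∈ {a, b}ᶜ, f x := by
  rw [← sum_add_sum_compl {a, b}, sum_pair hab]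

lemma Matrix.pow_three_apply {n R : Type*} [Fintype n] [DecidableEq n] [Semiring R]
    (M : Matrix n n R) (i j : n) : (M ^ 3) i j = ∑ k, ∑ l, M i k * M k l * M l j := by
  simp_rw [pow_three, mul_apply, mul_sum, mul_assoc]

lemma integral_id_bernoulliReal {q : ℝ} (hq : 0 ≤ q) : ∫ x, x ∂bernoulliReal q = q := by
  have hint : ∀ (c : ENNReal) (a : ℝ), c ≠ ⊤ → Integrable (fun x : ℝ => x) (c • Measure.dirac a) :=
    fun c a hc => (integrable_dirac (by simp)).smul_measure hc
  rw [bernoulliReal, integral_add_measure (hint _ _ ENNReal.ofReal_ne_top)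
    (hint _ _ ENNReal.ofReal_ne_top), integral_smul_measure, integral_smul_measure,
    integral_dirac, integral_dirac, ENNReal.toReal_ofReal hq]
  simp

-- `ENNReal.ofReal` truncates at `0`: for `q < 0` the total mass is `1 - q`, not `1`.
lemma nonneg_of_isProbabilityMeasure_bernoulliReal {q : ℝ}
    [IsProbabilityMeasure (bernoulliReal q)] : 0 ≤ q := by
  by_contra! hq
  have h := measure_univ (μ := bernoulliReal q)
  simp [bernoulliReal, ENNReal.ofReal_of_nonpos hq.le] at h
  linarith

lemma integral_eq_of_map_eq_bernoulliReal {Ω : Type*} [MeasurableSpace Ω] {μ : Measure Ω}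
    [IsProbabilityMeasure μ] {X : Ω → ℝ} {q : ℝ} (hX : Measurable X)
    (h : μ.map X = bernoulliReal q) : ∫ ω, X ω ∂μ = q := by
  have : IsProbabilityMeasure (bernoulliReal q) :=
    h ▸ Measure.isProbabilityMeasure_map hX.aemeasurable
  rw [← integral_map (f := fun x => x) hX.aemeasurable aestronglyMeasurable_id, h,
    integral_id_bernoulliReal nonneg_of_isProbabilityMeasure_bernoulliReal]

/-- The index of the entry `A a b` in the independent family of `IsSBM.indep`. -/
def edge {n : ℕ} (a b : Fin n) (h : a ≠ b) : {e : Fin n × Fin n // e.1 < e.2} :=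
  ⟨(min a b, max a b), min_lt_max.2 h⟩

lemma edge_ne_edge {n : ℕ} {a b c d : Fin n} (hab : a ≠ b) (hcd : c ≠ d)
    (h : s(a, b) ≠ s(c, d)) : edge a b hab ≠ edge c d hcd := by
  intro he
  apply h
  rw [← Sym2.inf_eq_inf_and_sup_eq_sup]
  simpa [edge] using he

def community (N : ℕ) (a : Fin (2 * N)) : Bool := decide ((a : ℕ) < N)

lemma sameCom_iff_community_eq {N : ℕ} {a b : Fin (2 * N)} :
    sameCom N a b ↔ community N a = community N b := by
  simp [sameCom, community]

lemma card_community_fiber (N : ℕ) (b : Bool) : #{a : Fin (2 * N) | community N a = b} = N := by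
  have hlt : #{a : Fin (2 * N) | (a : ℕ) < N} = N := by
    rw [Fin.card_filter_val_lt]; omega
  have hall := card_filter_add_card_filter_not (s := univ) fun a : Fin (2 * N) => (a : ℕ) < N
  cases b <;> simp_all [community]; omega

lemma card_community_fiber_compl_pair {N : ℕ} {i j : Fin (2 * N)}
    (hij : community N i ≠ community N j) (b : Bool) :
    #{a ∈ {i, j}ᶜ | community N a = b} + 1 = N := by
  have hpair : #{a ∈ {i, j} | community N a = b} = 1 := by
    cases b <;> cases hi : community N i <;> cases hj : community N j <;>
      simp_all [filter_insert, filter_singleton]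
  rw [← hpair, add_comm, ← card_union_of_disjoint (disjoint_filter_filter disjoint_compl_right),
    ← filter_union, union_compl, card_community_fiber]

lemma sum_compl_pair_comp_community {N : ℕ} {i j : Fin (2 * N)}
    (hij : community N i ≠ community N j) (g : Bool → ℝ) :
    ∑ a ∈ ({i, j}ᶜ : Finset _), g (community N a) = ((N : ℝ) - 1) * ∑ b, g b := by
  have hN : 1 ≤ N := by have := card_community_fiber_compl_pair hij true; omega
  rw [sum_comp_eq_mul_sum_of_card_fiber (m := N - 1) fun b => by
    have := card_community_fiber_compl_pair hij b; omega, Nat.cast_sub hN, Nat.cast_one]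

def blockProb (p : ℝ) (x y : Bool) : ℝ := if x = y then p else 1 - p

def edgeProb (N : ℕ) (p : ℝ) (a b : Fin (2 * N)) : ℝ := blockProb p (community N a) (community N b)

lemma edgeProb_comm (N : ℕ) (p : ℝ) (a b : Fin (2 * N)) : edgeProb N p a b = edgeProb N p b a := by
  simp only [edgeProb, blockProb, eq_comm]

lemma edgeProb_self (N : ℕ) (p : ℝ) (a : Fin (2 * N)) : edgeProb N p a a = p := by
  simp [edgeProb, blockProb]

namespace IsSBM

variable {Ω : Type*} [MeasurableSpace Ω] {μ : Measure Ω} {N : ℕ} {p : ℝ}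
  {A : Ω → Matrix (Fin (2 * N)) (Fin (2 * N)) ℝ}

lemma apply_comm (hA : IsSBM μ N p A) (ω : Ω) (a b : Fin (2 * N)) : A ω a b = A ω b a := by
  simpa using congrFun (congrFun (hA.symm ω) b) a

lemma apply_mul_self (hA : IsSBM μ N p A) (ω : Ω) (a b : Fin (2 * N)) :
    A ω a b * A ω a b = A ω a b := by
  rcases hA.vals ω a b with h | h <;> simp [h]

lemma apply_edge (hA : IsSBM μ N p A) (ω : Ω) {a b : Fin (2 * N)} (h : a ≠ b) :
    A ω (edge a b h).1.1 (edge a b h).1.2 = A ω a b := by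
  rcases le_total a b with hab | hba
  · simp [edge, hab]
  · simp [edge, hba, hA.apply_comm ω b a]

lemma integrable_apply_mul_apply_mul_apply (hA : IsSBM μ N p A) (a b c d e f : Fin (2 * N)) :
    Integrable (fun ω => A ω a b * A ω c d * A ω e f) μ := by
  have := hA.isProb
  refine .of_bound (((hA.meas a b).mul (hA.meas c d)).mul (hA.meas e f)).aestronglyMeasurable 1
    (ae_of_all _ fun ω => ?_)
  rcases hA.vals ω a b with h₁ | h₁ <;> rcases hA.vals ω c d with h₂ | h₂ <;>
    rcases hA.vals ω e f with h₃ | h₃ <;> simp [h₁, h₂, h₃]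

lemma integral_apply (hA : IsSBM μ N p A) {a b : Fin (2 * N)} (h : a ≠ b) :
    ∫ ω, A ω a b ∂μ = edgeProb N p a b := by
  have := hA.isProb
  rcases h.lt_or_gt with hab | hba
  · rw [integral_eq_of_map_eq_bernoulliReal (hA.meas a b) (hA.bern a b hab)]
    simp [edgeProb, blockProb, sameCom_iff_community_eq]
  · simp_rw [hA.apply_comm _ a b]
    rw [integral_eq_of_map_eq_bernoulliReal (hA.meas b a) (hA.bern b a hba), edgeProb_comm]
    simp [edgeProb, blockProb, sameCom_iff_community_eq]

lemma integral_apply_mul_apply (hA : IsSBM μ N p A) {a b c d : Fin (2 * N)} (hab : a ≠ b)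
    (hcd : c ≠ d) (h : s(a, b) ≠ s(c, d)) :
    ∫ ω, A ω a b * A ω c d ∂μ = edgeProb N p a b * edgeProb N p c d := by
  have key := (hA.indep.indepFun (edge_ne_edge hab hcd h)).integral_fun_mul_eq_mul_integral
    (hA.meas _ _).aestronglyMeasurable (hA.meas _ _).aestronglyMeasurable
  simp only [hA.apply_edge] at key
  rw [key, hA.integral_apply hab, hA.integral_apply hcd]

lemma integral_apply_mul_apply_mul_apply (hA : IsSBM μ N p A) {a b c d e f : Fin (2 * N)}
    (hab : a ≠ b) (hcd : c ≠ d) (hef : e ≠ f) (h₁ : s(a, b) ≠ s(c, d)) (h₂ : s(a, b) ≠ s(e, f))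
    (h₃ : s(c, d) ≠ s(e, f)) :
    ∫ ω, A ω a b * A ω c d * A ω e f ∂μ =
      edgeProb N p a b * edgeProb N p c d * edgeProb N p e f := by
  have hind := hA.indep.indepFun_mul_left (fun _ => hA.meas _ _) _ _ _
    (edge_ne_edge hab hef h₂) (edge_ne_edge hcd hef h₃)
  have key := hind.integral_fun_mul_eq_mul_integral
    ((hA.meas _ _).mul (hA.meas _ _)).aestronglyMeasurable (hA.meas _ _).aestronglyMeasurable
  simp only [Pi.mul_apply, hA.apply_edge] at key
  rw [key, hA.integral_apply_mul_apply hab hcd h₁, hA.integral_apply hef]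

lemma integral_pow_three_apply (hA : IsSBM μ N p A) (i j : Fin (2 * N)) :
    ∫ ω, (A ω ^ 3) i j ∂μ = ∑ k, ∑ l, ∫ ω, A ω i k * A ω k l * A ω l j ∂μ := by
  simp_rw [Matrix.pow_three_apply]
  rw [integral_finsetSum _ fun k _ =>
    integrable_finsetSum _ fun l _ => hA.integrable_apply_mul_apply_mul_apply _ _ _ _ _ _]
  simp_rw [integral_finsetSum _ fun l _ => hA.integrable_apply_mul_apply_mul_apply _ _ _ _ _ _]

lemma sum_integral_walks_via_target (hA : IsSBM μ N p A) {i j : Fin (2 * N)} (hij : i ≠ j) :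
    ∑ l, ∫ ω, A ω i j * A ω j l * A ω l j ∂μ =
      edgeProb N p i j * (1 + ∑ l ∈ {i, j}ᶜ, edgeProb N p j l) := by
  have hback : ∫ ω, A ω i j * A ω j i * A ω i j ∂μ = edgeProb N p i j := by
    simp only [hA.apply_comm _ j i, hA.apply_mul_self]
    exact hA.integral_apply hij
  have hfresh : ∀ l ∈ ({i, j}ᶜ : Finset _),
      ∫ ω, A ω i j * A ω j l * A ω l j ∂μ = edgeProb N p i j * edgeProb N p j l := by
    intro l hl
    simp only [mem_compl, mem_insert, mem_singleton, not_or] at hl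
    simp only [mul_assoc, hA.apply_comm _ l j, hA.apply_mul_self]
    exact hA.integral_apply_mul_apply hij (Ne.symm hl.2) (by rw [Ne, Sym2.eq_iff]; grind)
  rw [sum_univ_eq_add_add_sum_compl_pair hij, hback, sum_congr rfl hfresh, ← mul_sum]
  simp [hA.diag, mul_add]

lemma sum_integral_walks_via_fresh (hA : IsSBM μ N p A) {i j k : Fin (2 * N)} (hij : i ≠ j)
    (hk : k ∈ ({i, j}ᶜ : Finset _)) :
    ∑ l, ∫ ω, A ω i k * A ω k l * A ω l j ∂μ = edgeProb N p i k * edgeProb N p i j +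
      ∑ l ∈ ({i, j}ᶜ : Finset _).erase k,
        edgeProb N p i k * edgeProb N p k l * edgeProb N p l j := by
  simp only [mem_compl, mem_insert, mem_singleton, not_or] at hk
  have hback : ∫ ω, A ω i k * A ω k i * A ω i j ∂μ = edgeProb N p i k * edgeProb N p i j := by
    simp only [hA.apply_comm _ k i, hA.apply_mul_self]
    exact hA.integral_apply_mul_apply (Ne.symm hk.1) hij (by rw [Ne, Sym2.eq_iff]; grind)
  have hfresh : ∀ l ∈ ({i, j}ᶜ : Finset _).erase k, ∫ ω, A ω i k * A ω k l * A ω l j ∂μ =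
      edgeProb N p i k * edgeProb N p k l * edgeProb N p l j := by
    intro l hl
    simp only [mem_compl, mem_erase, mem_insert, mem_singleton, not_or] at hl
    exact hA.integral_apply_mul_apply_mul_apply (Ne.symm hk.1) (Ne.symm hl.1) hl.2.2
      (by rw [Ne, Sym2.eq_iff]; grind) (by rw [Ne, Sym2.eq_iff]; grind)
      (by rw [Ne, Sym2.eq_iff]; grind)
  have hloop : ∫ ω, A ω i k * A ω k k * A ω k j ∂μ = 0 := by simp [hA.diag]
  rw [sum_univ_eq_add_add_sum_compl_pair hij, hback,
    ← sum_erase (f := fun l => ∫ ω, A ω i k * A ω k l * A ω l j ∂μ) _ hloop, sum_congr rfl hfresh]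
  simp [hA.diag]

lemma integral_pow_three_apply_eq_sum_walks (hA : IsSBM μ N p A) {i j : Fin (2 * N)}
    (hij : i ≠ j) :
    ∫ ω, (A ω ^ 3) i j ∂μ =
      edgeProb N p i j * (1 + ∑ l ∈ {i, j}ᶜ, edgeProb N p j l + ∑ k ∈ {i, j}ᶜ, edgeProb N p i k)
        + ∑ k ∈ {i, j}ᶜ, ∑ l ∈ ({i, j}ᶜ : Finset _).erase k,
            edgeProb N p i k * edgeProb N p k l * edgeProb N p l j := by
  rw [hA.integral_pow_three_apply, sum_univ_eq_add_add_sum_compl_pair hij,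
    hA.sum_integral_walks_via_target hij,
    sum_congr rfl fun k hk => hA.sum_integral_walks_via_fresh hij hk, sum_add_distrib,
    ← sum_mul]
  simp only [hA.diag, zero_mul, integral_zero, sum_const_zero, zero_add]
  ring

end IsSBM

lemma sum_walks_eq_of_community_ne {N : ℕ} (p : ℝ) {i j : Fin (2 * N)}
    (hij : community N i ≠ community N j) :
    edgeProb N p i j * (1 + ∑ l ∈ {i, j}ᶜ, edgeProb N p j l + ∑ k ∈ {i, j}ᶜ, edgeProb N p i k)
        + ∑ k ∈ {i, j}ᶜ, ∑ l ∈ ({i, j}ᶜ : Finset _).erase k,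
            edgeProb N p i k * edgeProb N p k l * edgeProb N p l j =
      ((N : ℝ) - 1) * (3 * N - 5) * p ^ 2 * (1 - p) + ((N : ℝ) - 1) ^ 2 * (1 - p) ^ 3
        + (1 - p) + 2 * ((N : ℝ) - 1) * p * (1 - p) + 2 * ((N : ℝ) - 1) * (1 - p) ^ 2 := by
  have hsum := sum_compl_pair_comp_community hij
  have hpath : ∑ k ∈ ({i, j}ᶜ : Finset _), ∑ l ∈ ({i, j}ᶜ : Finset _),
      edgeProb N p i k * edgeProb N p k l * edgeProb N p l j =
        ((N : ℝ) - 1) * (((N : ℝ) - 1) * ∑ x, ∑ y,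
          blockProb p (community N i) x * blockProb p x y * blockProb p y (community N j)) := by
    refine (sum_congr rfl fun k _ => hsum fun y =>
      blockProb p (community N i) (community N k) * blockProb p (community N k) y *
        blockProb p y (community N j)).trans ?_
    rw [← mul_sum]
    congr 1
    exact hsum fun x => ∑ y, blockProb p (community N i) x * blockProb p x y *
      blockProb p y (community N j)
  have hfrom_j : ∑ l ∈ ({i, j}ᶜ : Finset _), edgeProb N p j l =
      ((N : ℝ) - 1) * ∑ x, blockProb p (community N j) x := hsum _
  have hfrom_i : ∑ k ∈ ({i, j}ᶜ : Finset _), edgeProb N p i k =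
      ((N : ℝ) - 1) * ∑ x, blockProb p (community N i) x := hsum _
  have hloop : ∑ k ∈ ({i, j}ᶜ : Finset _), edgeProb N p i k * edgeProb N p k k * edgeProb N p k j =
      ((N : ℝ) - 1) * ∑ x, blockProb p (community N i) x * p * blockProb p x (community N j) := by
    simp only [edgeProb_self]
    exact hsum fun x => blockProb p (community N i) x * p * blockProb p x (community N j)
  rw [sum_congr rfl fun k hk => sum_erase_eq_sub hk, sum_sub_distrib, hpath, hloop, hfrom_i,
    hfrom_j]
  have hcj : community N j = !community N i := by
    revert hij; cases community N i <;> cases community N j <;> decide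
  rw [edgeProb, hcj]
  cases community N i <;> simp [blockProb] <;> ring

theorem stmt8_general {Ω : Type*} [MeasurableSpace Ω] (μ : Measure Ω) (N : ℕ) (p : ℝ)
    (A : Ω → Matrix (Fin (2 * N)) (Fin (2 * N)) ℝ) (hA : IsSBM μ N p A)
    (i j : Fin (2 * N)) (hcom : ¬ sameCom N i j) :
    (∫ ω, ((A ω) ^ 3) i j ∂μ) =
      ((N : ℝ) - 1) * (3 * N - 5) * p ^ 2 * (1 - p) + ((N : ℝ) - 1) ^ 2 * (1 - p) ^ 3
        + (1 - p) + 2 * ((N : ℝ) - 1) * p * (1 - p) + 2 * ((N : ℝ) - 1) * (1 - p) ^ 2 := by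
  have hcom' : community N i ≠ community N j := sameCom_iff_community_eq.not.mp hcom
  rw [hA.integral_pow_three_apply_eq_sum_walks fun h => hcom' (congrArg _ h),
    sum_walks_eq_of_community_ne p hcom']

theorem stmt8 {Ω : Type*} [MeasurableSpace Ω] (μ : Measure Ω) (N : ℕ) (hN : 1 ≤ N)
    (p : ℝ) (hp : 1 / 2 < p) (hp1 : p ≤ 1)
    (A : Ω → Matrix (Fin (2 * N)) (Fin (2 * N)) ℝ) (hA : IsSBM μ N p A)
    (i j : Fin (2 * N)) (hcom : ¬ sameCom N i j) :
    (∫ ω, ((A ω) ^ 3) i j ∂μ) =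
      ((N : ℝ) - 1) * (3 * N - 5) * p ^ 2 * (1 - p) + ((N : ℝ) - 1) ^ 2 * (1 - p) ^ 3
        + (1 - p) + 2 * ((N : ℝ) - 1) * p * (1 - p) + 2 * ((N : ℝ) - 1) * (1 - p) ^ 2 :=
  stmt8_general μ N p A hA i j hcom
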